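/- arXiv:1407.5663 — 3 statements merged into one kernel-verified Lean document; each statement's English description precedes it below -/
import Mathlib

section
/- If a density matrix ρ on C^{pq} is separable, i.e., ρ = Σ_i c_i ρ_i ⊗ η_i with c_i ≥ 0, Σ c_i = 1, ρ_i density matrices of size p and η_i density matrices of size q, then the (p,q)-partial transpose ρ^PT is positive semidefinite. -/
open scoped Matrix Kronecker ComplexOrder

/-- The (p,q)-partial transpose: `A^PT_{(i,j)(k,l)} = A_{(i,l)(k,j)}`. -/
def partialTranspose {p q : ℕ} (A : Matrix (Fin p × Fin q) (Fin p × Fin q) ℂ) :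
    Matrix (Fin p × Fin q) (Fin p × Fin q) ℂ :=
  Matrix.of fun x y => A (x.1, y.2) (y.1, x.2)

/-- A density matrix: Hermitian positive semidefinite with unit trace. -/
def IsDensity {n : Type*} [Fintype n] (A : Matrix n n ℂ) : Prop :=
  A.PosSemidef ∧ A.trace = 1

/-- Separability of a density matrix on `ℂ^p ⊗ ℂ^q`. -/
def Separable {p q : ℕ} (A : Matrix (Fin p × Fin q) (Fin p × Fin q) ℂ) : Prop :=
  ∃ (m : ℕ) (c : Fin m → ℝ) (ρ : Fin m → Matrix (Fin p) (Fin p) ℂ)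
    (η : Fin m → Matrix (Fin q) (Fin q) ℂ),
    (∀ i, 0 ≤ c i) ∧ (∑ i, c i = 1) ∧ (∀ i, IsDensity (ρ i)) ∧ (∀ i, IsDensity (η i)) ∧
    A = ∑ i, (c i : ℂ) • (ρ i ⊗ₖ η i)

/-!
The partial transpose is linear and sends `A ⊗ₖ B` to `A ⊗ₖ Bᵀ`. A separable state is thus mapped
to a convex combination of products `ρᵢ ⊗ₖ ηᵢᵀ`, and these are positive semidefinite because the
transpose of a positive semidefinite matrix is again positive semidefinite.
-/

section PartialTranspose

variable {p q : ℕ}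

lemma partialTranspose_kronecker (A : Matrix (Fin p) (Fin p) ℂ) (B : Matrix (Fin q) (Fin q) ℂ) :
    partialTranspose (A ⊗ₖ B) = A ⊗ₖ Bᵀ := by
  ext x y
  simp [partialTranspose, Matrix.kroneckerMap_apply]

lemma partialTranspose_smul (c : ℂ) (A : Matrix (Fin p × Fin q) (Fin p × Fin q) ℂ) :
    partialTranspose (c • A) = c • partialTranspose A := by
  ext x y
  simp [partialTranspose]

lemma partialTranspose_sum {ι : Type*} (s : Finset ι)
    (A : ι → Matrix (Fin p × Fin q) (Fin p × Fin q) ℂ) :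
    partialTranspose (∑ i ∈ s, A i) = ∑ i ∈ s, partialTranspose (A i) := by
  ext x y
  simp [partialTranspose, Matrix.sum_apply]

end PartialTranspose

theorem peres_criterion_general {p q : ℕ} (ρ : Matrix (Fin p × Fin q) (Fin p × Fin q) ℂ)
    (hsep : Separable ρ) :
    (partialTranspose ρ).PosSemidef := by
  obtain ⟨m, c, σ, η, hc, -, hσ, hη, rfl⟩ := hsep
  simp only [partialTranspose_sum, partialTranspose_smul, partialTranspose_kronecker]
  exact Matrix.posSemidef_sum _ fun i _ =>
    ((hσ i).1.kronecker (hη i).1.transpose).smul (Complex.zero_le_real.mpr (hc i))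

theorem peres_criterion {p q : ℕ} (ρ : Matrix (Fin p × Fin q) (Fin p × Fin q) ℂ)
    (hρ : IsDensity ρ) (hsep : Separable ρ) :
    (partialTranspose ρ).PosSemidef :=
  peres_criterion_general ρ hsep
end

section
/- For j ≥ 0 and n ≥ 4 + j, the number of labeled simple graphs on n vertices with exactly (n-1)(n-2)/2 − j + 1 edges having at least one vertex of degree 1 equals n(n-1) · C((n-1)(n-2)/2, j), where C denotes the binomial coefficient. -/
/-- `Mcount n i` : the number of labeled simple graphs on `n` vertices with
exactly `i` edges having at least one vertex of degree 1. -/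
noncomputable def Mcount (n i : ℕ) : ℕ :=
  Set.ncard {G : SimpleGraph (Fin n) |
    G.edgeSet.ncard = i ∧ ∃ v, (G.neighborSet v).ncard = 1}

/-!
If `v` has degree one with neighbour `w`, every other edge avoids `v`, so such graphs with
`m + 1` edges correspond to the `m`-subsets of the `C(n - 1, 2)` edges of the complete graph on
the remaining vertices. Two distinct vertices of degree one would force all but two edges to lie
among the other `n - 2` vertices, i.e. at most `2 + C(n - 2, 2)` edges; for `n ≥ j + 4` the graphs
in question have more, so the vertex of degree one is unique. Hence they are counted by choosing
the leaf `v`, its neighbour `w`, and the remaining `C(n - 1, 2) - j` edges.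
-/

open Finset SimpleGraph

section edgesWithin

variable {V : Type*} [DecidableEq V]

def edgesWithin (s : Finset V) : Finset (Sym2 V) := {e ∈ s.sym2 | ¬e.IsDiag}

theorem mem_edgesWithin {s : Finset V} {e : Sym2 V} :
    e ∈ edgesWithin s ↔ ¬e.IsDiag ∧ ∀ a ∈ e, a ∈ s := by
  rw [edgesWithin, mem_filter, mem_sym2_iff, and_comm]

theorem card_edgesWithin (s : Finset V) : #(edgesWithin s) = (#s).choose 2 := by
  rw [edgesWithin, sym2_eq_image, Sym2.filter_image_mk_not_isDiag, Sym2.card_image_offDiag]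

end edgesWithin

namespace SimpleGraph

variable {V : Type*}

theorem adj_of_neighborSet_eq_singleton {G : SimpleGraph V} {v w : V}
    (h : G.neighborSet v = {w}) : G.Adj v w := by
  rw [← mem_neighborSet, h]
  rfl

theorem eq_of_mem_edgeSet_of_neighborSet_eq_singleton {G : SimpleGraph V} {v w : V}
    (h : G.neighborSet v = {w}) {e : Sym2 V} (he : e ∈ G.edgeSet) (hve : v ∈ e) :
    e = s(v, w) := by
  obtain ⟨x, rfl⟩ := Sym2.mem_iff_exists.1 hve
  have hx : x ∈ G.neighborSet v := he
  rw [h, Set.mem_singleton_iff] at hx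
  rw [hx]

variable [Fintype V]

theorem ncard_neighborSet_eq_degree (G : SimpleGraph V) [DecidableRel G.Adj] (v : V) :
    (G.neighborSet v).ncard = G.degree v := by
  rw [← Nat.card_coe_set_eq, Nat.card_eq_fintype_card, card_neighborSet_eq_degree]

theorem card_edgeFinset_le_sum_degree_add_choose [DecidableEq V] (G : SimpleGraph V)
    [DecidableRel G.Adj] (S : Finset V) :
    #G.edgeFinset ≤ ∑ v ∈ S, G.degree v + (Fintype.card V - #S).choose 2 := by
  have hsub : G.edgeFinset ⊆ S.biUnion (fun v => G.incidenceFinset v) ∪ edgesWithin Sᶜ := by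
    intro e he
    rw [mem_edgeFinset] at he
    by_cases h : ∃ v ∈ S, v ∈ e
    · obtain ⟨v, hv, hve⟩ := h
      exact mem_union_left _
        (mem_biUnion.2 ⟨v, hv, (G.mem_incidenceFinset _ _).2 ⟨he, hve⟩⟩)
    · push Not at h
      exact mem_union_right _ (mem_edgesWithin.2
        ⟨G.not_isDiag_of_mem_edgeSet he, fun a ha => mem_compl.2 fun haS => h a haS ha⟩)
  calc #G.edgeFinset ≤ #(S.biUnion fun v => G.incidenceFinset v) + #(edgesWithin Sᶜ) :=
        (card_le_card hsub).trans (card_union_le _ _)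
    _ ≤ ∑ v ∈ S, #(G.incidenceFinset v) + (Fintype.card V - #S).choose 2 := by
        rw [card_edgesWithin, card_compl]
        exact Nat.add_le_add_right card_biUnion_le _
    _ = ∑ v ∈ S, G.degree v + (Fintype.card V - #S).choose 2 := by
        simp only [card_incidenceFinset_eq_degree]

theorem eq_of_ncard_neighborSet_eq_one {G : SimpleGraph V}
    (hG : 2 + (Fintype.card V - 2).choose 2 < G.edgeSet.ncard) {u v : V}
    (hu : (G.neighborSet u).ncard = 1) (hv : (G.neighborSet v).ncard = 1) : u = v := by
  classical
  by_contra huv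
  have hbound := G.card_edgeFinset_le_sum_degree_add_choose {u, v}
  rw [sum_pair huv, card_pair huv, ← ncard_neighborSet_eq_degree, ← ncard_neighborSet_eq_degree,
    hu, hv, ← Set.ncard_coe_finset, coe_edgeFinset] at hbound
  omega

variable [DecidableEq V]

theorem edgeFinset_erase_subset_edgesWithin {G : SimpleGraph V} [DecidableRel G.Adj] {v w : V}
    (h : G.neighborSet v = {w}) : G.edgeFinset.erase s(v, w) ⊆ edgesWithin (univ.erase v) := by
  intro e he
  obtain ⟨hne, hG⟩ := mem_erase.1 he
  rw [mem_edgeFinset] at hG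
  refine mem_edgesWithin.2
    ⟨G.not_isDiag_of_mem_edgeSet hG, fun a ha => mem_erase.2 ⟨?_, mem_univ a⟩⟩
  rintro rfl
  exact hne (eq_of_mem_edgeSet_of_neighborSet_eq_singleton h hG ha)

section pendant

variable {v w : V} {s : Finset (Sym2 V)}

theorem mk_notMem_of_subset_edgesWithin (hs : s ⊆ edgesWithin (univ.erase v)) :
    s(v, w) ∉ s := fun h =>
  notMem_erase v univ ((mem_edgesWithin.1 (hs h)).2 v (Sym2.mem_mk_left v w))

theorem edgeSet_fromEdgeSet_insert (hwv : w ≠ v) (hs : s ⊆ edgesWithin (univ.erase v)) :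
    (fromEdgeSet (insert s(v, w) (s : Set (Sym2 V)))).edgeSet = insert s(v, w) ↑s := by
  refine (edgeSet_eq_iff _ _).2 ⟨rfl, Set.disjoint_left.2 ?_⟩
  rintro e (rfl | he) hdiag
  · exact hwv (Sym2.mk_isDiag_iff.1 hdiag).symm
  · exact (mem_edgesWithin.1 (hs he)).1 hdiag

theorem neighborSet_fromEdgeSet_insert (hwv : w ≠ v) (hs : s ⊆ edgesWithin (univ.erase v)) :
    (fromEdgeSet (insert s(v, w) (s : Set (Sym2 V)))).neighborSet v = {w} := by
  ext x
  simp only [mem_neighborSet, fromEdgeSet_adj, Set.mem_insert_iff, mem_coe,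
    Set.mem_singleton_iff]
  constructor
  · rintro ⟨h | h, -⟩
    · exact Sym2.congr_right.1 h
    · exact absurd ((mem_edgesWithin.1 (hs h)).2 v (Sym2.mem_mk_left v x)) (notMem_erase v univ)
  · rintro rfl
    exact ⟨Or.inl rfl, hwv.symm⟩

theorem ncard_edgeSet_fromEdgeSet_insert (hwv : w ≠ v) (hs : s ⊆ edgesWithin (univ.erase v)) :
    (fromEdgeSet (insert s(v, w) (s : Set (Sym2 V)))).edgeSet.ncard = #s + 1 := by
  rw [edgeSet_fromEdgeSet_insert hwv hs, ← coe_insert, Set.ncard_coe_finset,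
    card_insert_of_notMem (mk_notMem_of_subset_edgesWithin hs)]

end pendant

open Classical in
theorem card_filter_neighborSet_eq_singleton {v w : V} (hwv : w ≠ v) (m : ℕ) :
    #{G : SimpleGraph V | G.neighborSet v = {w} ∧ G.edgeSet.ncard = m + 1} =
      ((Fintype.card V - 1).choose 2).choose m := by
  rw [← card_univ, ← card_erase_of_mem (mem_univ v), ← card_edgesWithin,
    ← card_powersetCard]
  refine card_nbij' (fun G => G.edgeFinset.erase s(v, w))
    (fun s => fromEdgeSet (insert s(v, w) (s : Set (Sym2 V)))) ?_ ?_ ?_ ?_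
  · intro G hG
    obtain ⟨hN, hE⟩ := (mem_filter.1 hG).2
    have hvw : s(v, w) ∈ G.edgeFinset := mem_edgeFinset.2 (adj_of_neighborSet_eq_singleton hN)
    rw [mem_coe, mem_powersetCard, card_erase_of_mem hvw, ← Set.ncard_coe_finset, coe_edgeFinset,
      hE]
    exact ⟨edgeFinset_erase_subset_edgesWithin hN, rfl⟩
  · intro s hs
    obtain ⟨hsub, rfl⟩ := mem_powersetCard.1 hs
    exact mem_filter.2 ⟨mem_univ _, neighborSet_fromEdgeSet_insert hwv hsub,
      ncard_edgeSet_fromEdgeSet_insert hwv hsub⟩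
  · intro G hG
    obtain ⟨hN, -⟩ := (mem_filter.1 hG).2
    have hvw : s(v, w) ∈ G.edgeFinset := mem_edgeFinset.2 (adj_of_neighborSet_eq_singleton hN)
    dsimp only
    rw [← coe_insert, insert_erase hvw, coe_edgeFinset, fromEdgeSet_edgeSet]
  · intro s hs
    obtain ⟨hsub, -⟩ := mem_powersetCard.1 hs
    rw [← coe_inj, coe_erase, coe_edgeFinset, edgeSet_fromEdgeSet_insert hwv hsub,
      Set.insert_sdiff_self_of_notMem (mem_coe.not.2 (mk_notMem_of_subset_edgesWithin hsub))]

open Classical in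
theorem card_filter_ncard_neighborSet_eq_one (v : V) (m : ℕ) :
    #{G : SimpleGraph V | G.edgeSet.ncard = m + 1 ∧ (G.neighborSet v).ncard = 1} =
      (Fintype.card V - 1) * ((Fintype.card V - 1).choose 2).choose m := by
  have hsplit : ({G | G.edgeSet.ncard = m + 1 ∧ (G.neighborSet v).ncard = 1} : Finset _) =
      (univ.erase v).biUnion fun w =>
        {G : SimpleGraph V | G.neighborSet v = {w} ∧ G.edgeSet.ncard = m + 1} := by
    ext G
    simp only [mem_filter, mem_univ, true_and, mem_biUnion, mem_erase, Set.ncard_eq_one]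
    constructor
    · rintro ⟨hE, w, hN⟩
      exact ⟨w, ⟨(adj_of_neighborSet_eq_singleton hN).ne', trivial⟩, hN, hE⟩
    · rintro ⟨w, -, hN, hE⟩
      exact ⟨hE, w, hN⟩
  have hdisj : ((univ.erase v : Finset V) : Set V).PairwiseDisjoint fun w =>
      ({G | G.neighborSet v = {w} ∧ G.edgeSet.ncard = m + 1} : Finset (SimpleGraph V)) := by
    intro w₁ _ w₂ _ hne
    refine disjoint_filter.2 fun G _ h₁ h₂ => hne ?_
    exact Set.singleton_injective (h₁.1.symm.trans h₂.1)
  rw [hsplit, card_biUnion hdisj,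
    sum_congr rfl fun w hw => card_filter_neighborSet_eq_singleton (ne_of_mem_erase hw) m,
    sum_const, card_erase_of_mem (mem_univ v), card_univ, smul_eq_mul]

open Classical in
theorem card_filter_exists_ncard_neighborSet_eq_one {m : ℕ}
    (hm : 2 + (Fintype.card V - 2).choose 2 < m + 1) :
    #{G : SimpleGraph V | G.edgeSet.ncard = m + 1 ∧ ∃ v, (G.neighborSet v).ncard = 1} =
      Fintype.card V * (Fintype.card V - 1) * ((Fintype.card V - 1).choose 2).choose m := by
  have hsplit :
      ({G | G.edgeSet.ncard = m + 1 ∧ ∃ v, (G.neighborSet v).ncard = 1} : Finset _) =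
        univ.biUnion fun v =>
          {G : SimpleGraph V | G.edgeSet.ncard = m + 1 ∧ (G.neighborSet v).ncard = 1} := by
    ext G
    simp only [mem_filter, mem_univ, true_and, mem_biUnion, exists_and_left]
  have hdisj : ((univ : Finset V) : Set V).PairwiseDisjoint fun v =>
      ({G | G.edgeSet.ncard = m + 1 ∧ (G.neighborSet v).ncard = 1} : Finset (SimpleGraph V)) := by
    intro u _ v _ hne
    refine disjoint_filter.2 fun G _ hu hv => hne ?_
    exact eq_of_ncard_neighborSet_eq_one (hu.1 ▸ hm) hu.2 hv.2
  rw [hsplit, card_biUnion hdisj,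
    sum_congr rfl fun v _ => card_filter_ncard_neighborSet_eq_one v m, sum_const, card_univ,
    smul_eq_mul, mul_assoc]

end SimpleGraph

theorem mcount_near_max (j n : ℕ) (hn : 4 + j ≤ n) :
    Mcount n ((n - 1) * (n - 2) / 2 - j + 1) =
      n * (n - 1) * Nat.choose ((n - 1) * (n - 2) / 2) j := by
  classical
  have hN : (n - 1) * (n - 2) / 2 = (n - 1).choose 2 := by
    rw [Nat.choose_two_right, Nat.sub_sub]
  have hpascal : (n - 1).choose 2 = n - 2 + (n - 2).choose 2 := by
    rw [show n - 1 = n - 2 + 1 by omega, Nat.choose_succ_succ, Nat.choose_one_right]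
  have hcount := card_filter_exists_ncard_neighborSet_eq_one (V := Fin n)
    (m := (n - 1).choose 2 - j) (by rw [Fintype.card_fin]; omega)
  rw [Fintype.card_fin, Nat.choose_symm (by omega)] at hcount
  rw [Mcount, hN, ← hcount, ← Set.ncard_coe_finset, coe_filter_univ]
end

section
/- Let A be the Laplacian matrix of a graph on pq vertices, decomposed into p² blocks A^{i,j} of size q×q. If there exists a row index i such that exactly one off-diagonal block A^{i,j} (j ≠ i) fails to be line sum symmetric and all other off-diagonal blocks A^{i,k} (k ≠ i, k ≠ j) are line sum symmetric, then the (p,q)-partial transpose A^PT does not have all row sums equal to zero. -/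
open scoped Matrix

open scoped Classical in
/-- The Laplacian matrix `D - Adj` of a graph, over `ℂ`. -/
noncomputable def lapMat {V : Type*} [Fintype V] (G : SimpleGraph V) : Matrix V V ℂ :=
  Matrix.of fun x y =>
    (if x = y then ((G.neighborSet x).ncard : ℂ) else 0) - (if G.Adj x y then 1 else 0)

/-- The `(i,j)` block of size `q×q` of a `pq×pq` matrix. -/
def blockOf {p q : ℕ} (A : Matrix (Fin p × Fin q) (Fin p × Fin q) ℂ) (i j : Fin p) :
    Matrix (Fin q) (Fin q) ℂ :=
  Matrix.of fun k l => A (i, k) (j, l)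

/-- A square matrix is line sum symmetric if each row sum equals the
corresponding column sum. -/
def LineSumSym {q : ℕ} (M : Matrix (Fin q) (Fin q) ℂ) : Prop :=
  ∀ i, ∑ j, M i j = ∑ j, M j i


/-! If `A` and `A^PT` both have zero row sums, then at the position `(i, l)` the sum over `m`
of (row sum − column sum) of line `l` of the blocks `A^{i,m}` vanishes. For a Laplacian the
diagonal block `A^{i,i}` is symmetric, so if every `A^{i,m}` with `m ≠ j` is line sum symmetric,
the single remaining defect of `A^{i,j}` must vanish as well. -/

open Finset

theorem lapMat_eq_lapMatrix {V : Type*} [Fintype V] [DecidableEq V] (G : SimpleGraph V)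
    [DecidableRel G.Adj] : lapMat G = G.lapMatrix ℂ := by
  ext x y
  simp [lapMat, SimpleGraph.lapMatrix, SimpleGraph.degMatrix, SimpleGraph.adjMatrix,
    Matrix.diagonal, Set.ncard_eq_toFinset_card', ← SimpleGraph.neighborFinset_def]

theorem lapMat_isSymm {V : Type*} [Fintype V] (G : SimpleGraph V) : (lapMat G).IsSymm := by
  classical
  rw [lapMat_eq_lapMatrix]
  exact G.isSymm_lapMatrix ℂ

theorem sum_lapMat_row {V : Type*} [Fintype V] (G : SimpleGraph V) (x : V) :
    ∑ y, lapMat G x y = 0 := by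
  classical
  simpa [lapMat_eq_lapMatrix, Matrix.mulVec, dotProduct] using
    congrFun (G.lapMatrix_mulVec_const_eq_zero (R := ℂ)) x

section Blocks

variable {p q : ℕ} (A : Matrix (Fin p × Fin q) (Fin p × Fin q) ℂ)

theorem sum_row_eq_sum_blockOf (i : Fin p) (l : Fin q) :
    ∑ y, A (i, l) y = ∑ m, ∑ c, blockOf A i m l c :=
  Fintype.sum_prod_type _

theorem sum_partialTranspose_row_eq_sum_blockOf (i : Fin p) (l : Fin q) :
    ∑ y, partialTranspose A (i, l) y = ∑ m, ∑ c, blockOf A i m c l :=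
  Fintype.sum_prod_type _

theorem Matrix.IsSymm.lineSumSym_blockOf_self {A : Matrix (Fin p × Fin q) (Fin p × Fin q) ℂ}
    (hA : A.IsSymm) (i : Fin p) : LineSumSym (blockOf A i i) :=
  fun _ => sum_congr rfl fun _ _ => hA.apply _ _

theorem lineSumSym_blockOf_of_forall_ne (hrow : ∀ x, ∑ y, A x y = 0)
    (hPT : ∀ x, ∑ y, partialTranspose A x y = 0) {i j : Fin p}
    (hgood : ∀ k, k ≠ j → LineSumSym (blockOf A i k)) : LineSumSym (blockOf A i j) := by
  intro l
  have hdefect : ∑ m, (∑ c, blockOf A i m l c - ∑ c, blockOf A i m c l) = 0 := by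
    rw [sum_sub_distrib, ← sum_row_eq_sum_blockOf, ← sum_partialTranspose_row_eq_sum_blockOf,
      hrow, hPT, sub_zero]
  rw [sum_eq_single j (fun k _ hk => sub_eq_zero.2 (hgood k hk l)) (by simp)] at hdefect
  exact sub_eq_zero.1 hdefect

end Blocks

theorem pt_not_zero_row_sums_general {p q : ℕ} (G : SimpleGraph (Fin p × Fin q))
    (A : Matrix (Fin p × Fin q) (Fin p × Fin q) ℂ) (hA : A = lapMat G)
    (i j : Fin p) (hbad : ¬ LineSumSym (blockOf A i j))
    (hgood : ∀ k : Fin p, k ≠ i → k ≠ j → LineSumSym (blockOf A i k)) :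
    ¬ (∀ x, ∑ y, partialTranspose A x y = 0) := by
  subst hA
  intro hPT
  refine hbad (lineSumSym_blockOf_of_forall_ne _ (sum_lapMat_row G) hPT fun k hkj => ?_)
  by_cases hki : k = i
  · exact hki ▸ (lapMat_isSymm G).lineSumSym_blockOf_self i
  · exact hgood k hki hkj

theorem pt_not_zero_row_sums {p q : ℕ} (G : SimpleGraph (Fin p × Fin q))
    (A : Matrix (Fin p × Fin q) (Fin p × Fin q) ℂ) (hA : A = lapMat G)
    (i j : Fin p) (hij : j ≠ i) (hbad : ¬ LineSumSym (blockOf A i j))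
    (hgood : ∀ k : Fin p, k ≠ i → k ≠ j → LineSumSym (blockOf A i k)) :
    ¬ (∀ x, ∑ y, partialTranspose A x y = 0) :=
  pt_not_zero_row_sums_general G A hA i j hbad hgood
end
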